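/- Let H be a complex Hilbert space graded by a sequence (H_n)_{n∈ℕ} of pairwise orthogonal finite-dimensional closed subspaces whose closed linear span is H, and let M and N be graded closed subspaces of H. Writing M_n = M ∩ H_n and N_n = N ∩ H_n, one has c_e(M,N) = limsup_{n→∞} c(M_n, N_n); that is, inf{‖P_M P_N − P_{M∩N} + K‖ : K compact} = limsup_{n→∞} ‖P_{M_n} P_{N_n} − P_{M_n ∩ N_n}‖. -/

import Mathlib

/-- The orthogonal projection onto a subspace `K` of a complex inner product space,
as a bounded operator on the whole space (junk value `0` if `K` does not admit an
orthogonal projection; for a closed subspace of a Hilbert space it is the genuine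
orthogonal projection). -/
noncomputable def proj {H : Type*} [NormedAddCommGroup H] [InnerProductSpace ℂ H]
    (K : Submodule ℂ H) : H →L[ℂ] H :=
  letI := Classical.propDecidable (Submodule.HasOrthogonalProjection K)
  if h : Submodule.HasOrthogonalProjection K then
    haveI := h
    K.subtypeL.comp (Submodule.orthogonalProjectionOnto K)
  else 0

/-- The cosine of the Friedrichs angle between two (closed) subspaces `M`, `N`:
`c(M,N) = ‖P_M P_N - P_{M ∩ N}‖`. -/
noncomputable def friedrichs {H : Type*} [NormedAddCommGroup H] [InnerProductSpace ℂ H]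
    (M N : Submodule ℂ H) : ℝ :=
  ‖proj M * proj N - proj (M ⊓ N)‖

/-- The cosine of the essential Friedrichs angle between two (closed) subspaces `M`, `N`:
the infimum over compact operators `K` of `‖P_M P_N - P_{M ∩ N} + K‖`, i.e. the norm of
the class of `P_M P_N - P_{M ∩ N}` in the Calkin algebra. -/
noncomputable def essFriedrichs {H : Type*} [NormedAddCommGroup H] [InnerProductSpace ℂ H]
    (M N : Submodule ℂ H) : ℝ :=
  ⨅ K : {T : H →L[ℂ] H // IsCompactOperator ⇑T},
    ‖proj M * proj N - proj (M ⊓ N) + (K : H →L[ℂ] H)‖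

/-!
The projections `P_M`, `P_N`, `P_{M ∩ N}` commute with the grading projections `P_n`, hence so
does `T = P_M P_N - P_{M ∩ N}`, and `c(M_n, N_n) = ‖T P_n‖`. By Parseval, the norm of an operator
commuting with every `P_n` is the supremum of its block norms `‖T P_n‖`. Subtracting the
finite-rank operator `T (P_0 + ⋯ + P_{m-1})` leaves only the blocks `n ≥ m`, so
`c_e(M, N) ≤ limsup ‖T P_n‖`. Conversely `P_n → 0` strongly, which for compact `K` upgrades to
`‖P_n K‖ → 0`, and `‖T P_n‖ = ‖P_n T‖ ≤ ‖T + K‖ + ‖P_n K‖`.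
-/

open Filter Topology Metric
open scoped NNReal

lemma proj_eq_starProjection {H : Type*} [NormedAddCommGroup H] [InnerProductSpace ℂ H]
    (K : Submodule ℂ H) [h : K.HasOrthogonalProjection] : proj K = K.starProjection := by
  rw [proj, dif_pos h]
  rfl

namespace Submodule

variable {𝕜 E : Type*} [RCLike 𝕜] [NormedAddCommGroup E] [InnerProductSpace 𝕜 E]

lemma mem_of_commute_starProjection {U : Submodule 𝕜 E} [U.HasOrthogonalProjection]
    {T : E →L[𝕜] E} (h : Commute U.starProjection T) {x : E} (hx : x ∈ U) : T x ∈ U := by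
  have e : U.starProjection (T x) = T (U.starProjection x) := congr($(h.eq) x)
  rw [← U.starProjection_eq_self_iff.2 hx, ← e]
  exact U.starProjection_apply_mem _

lemma isCompactOperator_starProjection (U : Submodule 𝕜 E) [FiniteDimensional 𝕜 U] :
    IsCompactOperator U.starProjection :=
  (isCompactOperator_of_locallyCompactSpace_dom U.orthogonalProjectionOnto).clm_comp U.subtypeL

variable [CompleteSpace E]

lemma commute_starProjection_of_isSelfAdjoint {U : Submodule 𝕜 E} [U.HasOrthogonalProjection]
    {T : E →L[𝕜] E} (hT : IsSelfAdjoint T) (hU : ∀ x ∈ U, T x ∈ U) :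
    Commute U.starProjection T := by
  have hinv : U ∈ Module.End.invtSubmodule T.toLinearMap := (Module.End.mem_invtSubmodule _).2 hU
  refine (ContinuousLinearMap.IsIdempotentElem.commute_iff
    U.isIdempotentElem_starProjection).2 ⟨?_, ?_⟩
  · rwa [range_starProjection]
  · rw [ker_starProjection]
    exact ContinuousLinearMap.orthogonal_mem_invtSubmodule (by rwa [hT.adjoint_eq])

lemma commute_starProjection_inf {A B W : Submodule 𝕜 E} [A.HasOrthogonalProjection]
    [B.HasOrthogonalProjection] [(A ⊓ B).HasOrthogonalProjection] [W.HasOrthogonalProjection]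
    (hA : Commute A.starProjection W.starProjection)
    (hB : Commute B.starProjection W.starProjection) :
    Commute (A ⊓ B).starProjection W.starProjection :=
  commute_starProjection_of_isSelfAdjoint (isSelfAdjoint_starProjection W) fun _ hx =>
    ⟨mem_of_commute_starProjection hA hx.1, mem_of_commute_starProjection hB hx.2⟩

lemma starProjection_inf_eq_mul {A B : Submodule 𝕜 E} [A.HasOrthogonalProjection]
    [B.HasOrthogonalProjection] [(A ⊓ B).HasOrthogonalProjection]
    (h : Commute A.starProjection B.starProjection) :
    (A ⊓ B).starProjection = A.starProjection * B.starProjection := by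
  refine ContinuousLinearMap.IsStarProjection.ext isStarProjection_starProjection
    (isStarProjection_starProjection.mul isStarProjection_starProjection h) ?_
  rw [range_starProjection]
  refine le_antisymm (fun x hx => ⟨x, ?_⟩) ?_
  · rintro _ ⟨x, rfl⟩
    refine ⟨A.starProjection_apply_mem _, ?_⟩
    rw [ContinuousLinearMap.coe_coe, h.eq]
    exact B.starProjection_apply_mem _
  · simp [starProjection_eq_self_iff.2 hx.1, starProjection_eq_self_iff.2 hx.2]

end Submodule

lemma OrthogonalFamily.starProjection_mul_starProjection {𝕜 E ι : Type*} [RCLike 𝕜]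
    [NormedAddCommGroup E] [InnerProductSpace 𝕜 E] [DecidableEq ι] {V : ι → Submodule 𝕜 E}
    [∀ i, (V i).HasOrthogonalProjection]
    (hV : OrthogonalFamily 𝕜 (fun i => V i) fun i => (V i).subtypeₗᵢ) (i j : ι) :
    (V i).starProjection * (V j).starProjection = if i = j then (V j).starProjection else 0 := by
  split_ifs with hij
  · subst hij
    exact (V i).isIdempotentElem_starProjection.eq
  · exact (hV.isOrtho hij).starProjection_comp_starProjection

theorem IsCompactOperator.tendsto_comp_of_tendsto_apply {ι 𝕜 E F G : Type*} [RCLike 𝕜]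
    [NormedAddCommGroup E] [NormedSpace 𝕜 E] [NormedAddCommGroup F] [NormedSpace 𝕜 F]
    [NormedAddCommGroup G] [NormedSpace 𝕜 G] {K : E →L[𝕜] F} (hK : IsCompactOperator K)
    {l : Filter ι} {P : ι → F →L[𝕜] G} {C : ℝ≥0} (hPC : ∀ i, ‖P i‖₊ ≤ C)
    (hP : ∀ y, Tendsto (fun i => P i y) l (𝓝 0)) :
    Tendsto (fun i => (P i).comp K) l (𝓝 0) := by
  set S := closure (K '' closedBall 0 1)
  have hunif : TendstoUniformlyOn (fun i => ⇑(P i)) 0 l S := by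
    have hequi : EquicontinuousOn (fun i => ⇑(P i)) S :=
      (LipschitzWith.uniformEquicontinuous _ C fun i => (P i).lipschitz.weaken (hPC i))
        |>.equicontinuous.equicontinuousOn S
    have hconv := (EquicontinuousOn.tendsto_uniformOnFun_iff_pi' (𝔖 := {S})
      (by simpa using hK.isCompact_closure_image_closedBall 1) (by simpa using hequi) l 0).2
      (tendsto_pi_nhds.2 fun y => hP y)
    exact UniformOnFun.tendsto_iff_tendstoUniformlyOn.1 hconv S rfl
  rw [Metric.tendsto_nhds]
  intro ε hε
  filter_upwards [Metric.tendstoUniformlyOn_iff.1 hunif (ε / 2) (half_pos hε)] with i hi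
  rw [dist_zero_right]
  refine lt_of_le_of_lt (ContinuousLinearMap.opNorm_le_of_unit_norm (half_pos hε).le
    fun x hx => ?_) (half_lt_self hε)
  simpa using (hi (K x) (subset_closure ⟨x, by simp [hx], rfl⟩)).le

namespace IsHilbertSum

variable {𝕜 E ι : Type*} [RCLike 𝕜] [NormedAddCommGroup E] [InnerProductSpace 𝕜 E]
  [CompleteSpace E] {V : ι → Submodule 𝕜 E}

lemma hasSum_linearIsometryEquiv_apply
    (hV : IsHilbertSum 𝕜 (fun i => V i) fun i => (V i).subtypeₗᵢ) (x : E) :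
    HasSum (fun i => (hV.linearIsometryEquiv x i : E)) x := by
  simpa using hV.hasSum_linearIsometryEquiv_symm (hV.linearIsometryEquiv x)

variable [∀ i, CompleteSpace (V i)]

lemma linearIsometryEquiv_apply_coe
    (hV : IsHilbertSum 𝕜 (fun i => V i) fun i => (V i).subtypeₗᵢ) (x : E) (i : ι) :
    (hV.linearIsometryEquiv x i : E) = (V i).starProjection x := by
  classical
  set w := hV.linearIsometryEquiv x
  calc (w i : E) = (V i).starProjection (w i) :=
        ((V i).starProjection_eq_self_iff.2 (w i).2).symm
    _ = (V i).starProjection x := by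
      refine (hasSum_single i fun j hji => ?_).unique
        ((V i).starProjection.hasSum (hV.hasSum_linearIsometryEquiv_apply x))
      exact (V i).starProjection_apply_eq_zero_iff.2 ((hV.OrthogonalFamily.isOrtho hji).le (w j).2)

lemma hasSum_starProjection (hV : IsHilbertSum 𝕜 (fun i => V i) fun i => (V i).subtypeₗᵢ)
    (x : E) : HasSum (fun i => (V i).starProjection x) x := by
  simpa only [hV.linearIsometryEquiv_apply_coe] using hV.hasSum_linearIsometryEquiv_apply x

lemma hasSum_norm_sq_starProjection
    (hV : IsHilbertSum 𝕜 (fun i => V i) fun i => (V i).subtypeₗᵢ) (x : E) :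
    HasSum (fun i => ‖(V i).starProjection x‖ ^ 2) (‖x‖ ^ 2) := by
  simpa [← hV.linearIsometryEquiv_apply_coe] using
    lp.hasSum_norm (p := 2) (by norm_num) (hV.linearIsometryEquiv x)

lemma opNorm_le_of_commute (hV : IsHilbertSum 𝕜 (fun i => V i) fun i => (V i).subtypeₗᵢ)
    {S : E →L[𝕜] E} {c : ℝ} (hc : 0 ≤ c) (hS : ∀ i, Commute S (V i).starProjection)
    (hSV : ∀ i, ‖S * (V i).starProjection‖ ≤ c) : ‖S‖ ≤ c := by
  refine S.opNorm_le_bound hc fun x => ?_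
  have hblock (i : ι) :
      ‖(V i).starProjection (S x)‖ ^ 2 ≤ c ^ 2 * ‖(V i).starProjection x‖ ^ 2 := by
    have e : (V i).starProjection (S x) = S ((V i).starProjection ((V i).starProjection x)) := by
      rw [(V i).starProjection_eq_self_iff.2 ((V i).starProjection_apply_mem x)]
      exact congr($((hS i).eq) x).symm
    rw [e, ← mul_pow]
    gcongr
    exact ((S * (V i).starProjection).le_opNorm _).trans (by gcongr; exact hSV i)
  have hsq := hasSum_le hblock (hV.hasSum_norm_sq_starProjection (S x))
    ((hV.hasSum_norm_sq_starProjection x).mul_left (c ^ 2))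
  rw [← mul_pow] at hsq
  exact (pow_le_pow_iff_left₀ (norm_nonneg _) (by positivity) two_ne_zero).1 hsq

end IsHilbertSum

namespace IsHilbertSum

variable {𝕜 E : Type*} [RCLike 𝕜] [NormedAddCommGroup E] [InnerProductSpace 𝕜 E]
  [CompleteSpace E] {V : ℕ → Submodule 𝕜 E} [∀ n, FiniteDimensional 𝕜 (V n)]

lemma limsup_norm_mul_starProjection_le
    (hV : IsHilbertSum 𝕜 (fun n => V n) fun n => (V n).subtypeₗᵢ) {T : E →L[𝕜] E}
    (hT : ∀ n, Commute T (V n).starProjection) {K : E →L[𝕜] E} (hK : IsCompactOperator K) :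
    limsup (fun n => ‖T * (V n).starProjection‖) atTop ≤ ‖T + K‖ := by
  have hPK : Tendsto (fun n => ‖(V n).starProjection * K‖) atTop (𝓝 0) := by
    refine tendsto_zero_iff_norm_tendsto_zero.1 (hK.tendsto_comp_of_tendsto_apply (C := 1)
      (fun n => mod_cast (V n).starProjection_norm_le) fun y => ?_)
    rw [← Nat.cofinite_eq_atTop]
    exact (hV.hasSum_starProjection y).summable.tendsto_cofinite_zero
  have hle (n : ℕ) : ‖T * (V n).starProjection‖ ≤ ‖T + K‖ + ‖(V n).starProjection * K‖ :=
    calc ‖T * (V n).starProjection‖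
        = ‖(V n).starProjection * (T + K) - (V n).starProjection * K‖ := by
          rw [(hT n).eq, mul_add, add_sub_cancel_right]
      _ ≤ ‖(V n).starProjection * (T + K)‖ + ‖(V n).starProjection * K‖ := norm_sub_le _ _
      _ ≤ ‖T + K‖ + ‖(V n).starProjection * K‖ := by
          gcongr
          exact (norm_mul_le _ _).trans
            (mul_le_of_le_one_left (norm_nonneg _) (V n).starProjection_norm_le)
  have hlim := tendsto_const_nhds (x := ‖T + K‖) |>.add hPK
  rw [add_zero] at hlim
  exact (limsup_le_limsup (Eventually.of_forall hle)
    (isCoboundedUnder_le_of_le atTop fun n => norm_nonneg _) hlim.isBoundedUnder_le).trans_eq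
    hlim.limsup_eq

lemma iInf_norm_add_compact_le_limsup
    (hV : IsHilbertSum 𝕜 (fun n => V n) fun n => (V n).subtypeₗᵢ) {T : E →L[𝕜] E}
    (hT : ∀ n, Commute T (V n).starProjection) :
    ⨅ K : {K : E →L[𝕜] E // IsCompactOperator K}, ‖T + K‖ ≤
      limsup (fun n => ‖T * (V n).starProjection‖) atTop := by
  have hbdd (n : ℕ) : ‖T * (V n).starProjection‖ ≤ ‖T‖ :=
    (norm_mul_le _ _).trans (mul_le_of_le_one_right (norm_nonneg _) (V n).starProjection_norm_le)
  rw [limsup_eq]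
  refine le_csInf ⟨‖T‖, Eventually.of_forall hbdd⟩ fun c hc => ?_
  obtain ⟨m, hm⟩ := eventually_atTop.1 hc
  have hc0 : 0 ≤ c := (norm_nonneg _).trans (hm m le_rfl)
  set Q := ∑ k ∈ Finset.range m, (V k).starProjection
  have hQ : IsCompactOperator (-(T * Q)) :=
    ((Submodule.sum_mem (compactOperator _ E E) fun k _ =>
      (V k).isCompactOperator_starProjection).clm_comp T).neg
  have hQP (k : ℕ) : Q * (V k).starProjection = if k < m then (V k).starProjection else 0 := by
    simp [Q, Finset.sum_mul, hV.OrthogonalFamily.starProjection_mul_starProjection]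
  have hPQ (k : ℕ) : (V k).starProjection * Q = if k < m then (V k).starProjection else 0 := by
    simp [Q, Finset.mul_sum, hV.OrthogonalFamily.starProjection_mul_starProjection]
  refine (ciInf_le ⟨0, Set.forall_mem_range.2 fun _ => norm_nonneg _⟩ ⟨-(T * Q), hQ⟩).trans ?_
  rw [← sub_eq_add_neg]
  refine hV.opNorm_le_of_commute hc0 (fun k => (hT k).sub_left ((hT k).mul_left ?_)) fun k => ?_
  · exact (hQP k).trans (hPQ k).symm
  · rw [sub_mul, mul_assoc, hQP]
    split_ifs with hk
    · simpa using hc0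
    · simpa using hm k (not_lt.1 hk)

theorem iInf_norm_add_compact_eq_limsup
    (hV : IsHilbertSum 𝕜 (fun n => V n) fun n => (V n).subtypeₗᵢ) {T : E →L[𝕜] E}
    (hT : ∀ n, Commute T (V n).starProjection) :
    ⨅ K : {K : E →L[𝕜] E // IsCompactOperator K}, ‖T + K‖ =
      limsup (fun n => ‖T * (V n).starProjection‖) atTop :=
  haveI : Nonempty {K : E →L[𝕜] E // IsCompactOperator K} := ⟨⟨0, isCompactOperator_zero⟩⟩
  le_antisymm (hV.iInf_norm_add_compact_le_limsup hT)
    (le_ciInf fun K => hV.limsup_norm_mul_starProjection_le hT K.2)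

end IsHilbertSum

lemma friedrichs_inf_eq_norm_mul {H : Type*} [NormedAddCommGroup H] [InnerProductSpace ℂ H]
    [CompleteSpace H] {M N W : Submodule ℂ H} [M.HasOrthogonalProjection]
    [N.HasOrthogonalProjection] [(M ⊓ N).HasOrthogonalProjection] [FiniteDimensional ℂ W]
    (hM : Commute M.starProjection W.starProjection)
    (hN : Commute N.starProjection W.starProjection) :
    friedrichs (M ⊓ W) (N ⊓ W) = ‖(M.starProjection * N.starProjection -
      (M ⊓ N).starProjection) * W.starProjection‖ := by
  rw [friedrichs, inf_inf_inf_comm, inf_idem]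
  simp only [proj_eq_starProjection]
  rw [Submodule.starProjection_inf_eq_mul hM, Submodule.starProjection_inf_eq_mul hN,
    Submodule.starProjection_inf_eq_mul (Submodule.commute_starProjection_inf hM hN), sub_mul,
    mul_assoc, ← mul_assoc W.starProjection, ← hN.eq, mul_assoc,
    W.isIdempotentElem_starProjection.eq, ← mul_assoc]

theorem stmt7_general {H : Type*} [NormedAddCommGroup H] [InnerProductSpace ℂ H] [CompleteSpace H]
    -- a grading of `H`: pairwise orthogonal finite-dimensional closed subspaces
    -- with dense linear span
    (V : ℕ → Submodule ℂ H)
    (hVfd : ∀ n, FiniteDimensional ℂ (V n))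
    (hVortho : ∀ m n, m ≠ n → ∀ x ∈ V m, ∀ y ∈ V n, (inner ℂ x y : ℂ) = 0)
    (hVdense : (⨆ n, V n).topologicalClosure = ⊤)
    -- graded closed subspaces `M` and `N`
    (M N : Submodule ℂ H) (hM : IsClosed (M : Set H)) (hN : IsClosed (N : Set H))
    (hMgraded : ∀ n, proj M * proj (V n) = proj (V n) * proj M)
    (hNgraded : ∀ n, proj N * proj (V n) = proj (V n) * proj N) :
    essFriedrichs M N =
      Filter.limsup (fun n => friedrichs (M ⊓ V n) (N ⊓ V n)) Filter.atTop := by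
  have := hM.completeSpace_coe
  have := hN.completeSpace_coe
  have : CompleteSpace (M ⊓ N : Submodule ℂ H) := (hM.inter hN).completeSpace_coe
  have hV : IsHilbertSum ℂ (fun n => V n) fun n => (V n).subtypeₗᵢ :=
    .mkInternal _ (fun i j hij v w => hVortho i j hij v v.2 w w.2) hVdense.ge
  have hM' : ∀ n, Commute M.starProjection (V n).starProjection := by
    simpa only [commute_iff_eq, proj_eq_starProjection] using hMgraded
  have hN' : ∀ n, Commute N.starProjection (V n).starProjection := by
    simpa only [commute_iff_eq, proj_eq_starProjection] using hNgraded
  simp only [friedrichs_inf_eq_norm_mul (hM' _) (hN' _), essFriedrichs, proj_eq_starProjection]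
  exact hV.iInf_norm_add_compact_eq_limsup fun n =>
    ((hM' n).mul_left (hN' n)).sub_left (Submodule.commute_starProjection_inf (hM' n) (hN' n))

theorem stmt7 {H : Type*} [NormedAddCommGroup H] [InnerProductSpace ℂ H] [CompleteSpace H]
    -- a grading of `H`: pairwise orthogonal finite-dimensional closed subspaces
    -- with dense linear span
    (V : ℕ → Submodule ℂ H) (hVclosed : ∀ n, IsClosed ((V n : Set H)))
    (hVfd : ∀ n, FiniteDimensional ℂ (V n))
    (hVortho : ∀ m n, m ≠ n → ∀ x ∈ V m, ∀ y ∈ V n, (inner ℂ x y : ℂ) = 0)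
    (hVdense : (⨆ n, V n).topologicalClosure = ⊤)
    -- graded closed subspaces `M` and `N`
    (M N : Submodule ℂ H) (hM : IsClosed (M : Set H)) (hN : IsClosed (N : Set H))
    (hMgraded : ∀ n, proj M * proj (V n) = proj (V n) * proj M)
    (hNgraded : ∀ n, proj N * proj (V n) = proj (V n) * proj N) :
    essFriedrichs M N =
      Filter.limsup (fun n => friedrichs (M ⊓ V n) (N ⊓ V n)) Filter.atTop :=
  stmt7_general V hVfd hVortho hVdense M N hM hN hMgraded hNgraded
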